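/- arXiv:0903.1224 — 4 statements merged into one kernel-verified Lean document; each statement's English description precedes it below -/
import Mathlib

section
/- Let I = [a,b] ∩ 𝕋 be a closed bounded interval of a time scale 𝕋 and let g : I → ℝ be continuous and strictly increasing on I. For every δ > 0 there exists a partition a = t₀ < t₁ < ⋯ < tₙ = b of points of 𝕋 such that for each j, either g(tⱼ) − g(t_{j−1}) ≤ δ, or g(tⱼ) − g(t_{j−1}) > δ and ρ(tⱼ) = t_{j−1} (i.e., tⱼ is the immediate successor of t_{j−1} in 𝕋). -/
open Set Filter

noncomputable section

/-- Backward jump operator of a time scale `T`. -/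
def tsRho (T : Set ℝ) (t : ℝ) : ℝ := sSup {s ∈ T | s < t}

/-- Forward jump operator of a time scale `T`. -/
def tsSigma (T : Set ℝ) (t : ℝ) : ℝ := sInf {s ∈ T | t < s}

/-- A partition `a = t₀ < t₁ < ⋯ < tₙ = b` of `[a,b] ∩ T` by points of `T`. -/
structure TSPartition (T : Set ℝ) (a b : ℝ) where
  n : ℕ
  t : ℕ → ℝ
  npos : 0 < n
  mem : ∀ j ≤ n, t j ∈ T
  first : t 0 = a
  last : t n = b
  mono : ∀ j < n, t j < t (j + 1)

/-- Upper Darboux–Stieltjes delta sum `U_Δ(P, f, g)`. -/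
def upperSumD (T : Set ℝ) (f g : ℝ → ℝ) {a b : ℝ} (P : TSPartition T a b) : ℝ :=
  ∑ j ∈ Finset.range P.n,
    sSup (f '' (Set.Icc (P.t j) (tsRho T (P.t (j + 1))) ∩ T)) * (g (P.t (j + 1)) - g (P.t j))

/-- Lower Darboux–Stieltjes delta sum `L_Δ(P, f, g)`. -/
def lowerSumD (T : Set ℝ) (f g : ℝ → ℝ) {a b : ℝ} (P : TSPartition T a b) : ℝ :=
  ∑ j ∈ Finset.range P.n,
    sInf (f '' (Set.Icc (P.t j) (tsRho T (P.t (j + 1))) ∩ T)) * (g (P.t (j + 1)) - g (P.t j))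

/-- Upper Darboux–Stieltjes nabla sum `U_∇(P, f, g)`. -/
def upperSumN (T : Set ℝ) (f g : ℝ → ℝ) {a b : ℝ} (P : TSPartition T a b) : ℝ :=
  ∑ j ∈ Finset.range P.n,
    sSup (f '' (Set.Icc (tsSigma T (P.t j)) (P.t (j + 1)) ∩ T)) * (g (P.t (j + 1)) - g (P.t j))

/-- Lower Darboux–Stieltjes nabla sum `L_∇(P, f, g)`. -/
def lowerSumN (T : Set ℝ) (f g : ℝ → ℝ) {a b : ℝ} (P : TSPartition T a b) : ℝ :=
  ∑ j ∈ Finset.range P.n,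
    sInf (f '' (Set.Icc (tsSigma T (P.t j)) (P.t (j + 1)) ∩ T)) * (g (P.t (j + 1)) - g (P.t j))

/-- Upper Darboux–Stieltjes delta integral. -/
def upperIntD (T : Set ℝ) (a b : ℝ) (f g : ℝ → ℝ) : ℝ :=
  sInf (Set.range fun P : TSPartition T a b => upperSumD T f g P)

/-- Lower Darboux–Stieltjes delta integral. -/
def lowerIntD (T : Set ℝ) (a b : ℝ) (f g : ℝ → ℝ) : ℝ :=
  sSup (Set.range fun P : TSPartition T a b => lowerSumD T f g P)

/-- Upper Darboux–Stieltjes nabla integral. -/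
def upperIntN (T : Set ℝ) (a b : ℝ) (f g : ℝ → ℝ) : ℝ :=
  sInf (Set.range fun P : TSPartition T a b => upperSumN T f g P)

/-- Lower Darboux–Stieltjes nabla integral. -/
def lowerIntN (T : Set ℝ) (a b : ℝ) (f g : ℝ → ℝ) : ℝ :=
  sSup (Set.range fun P : TSPartition T a b => lowerSumN T f g P)

/-- `f` is Riemann–Stieltjes delta integrable with respect to `g` on `[a,b] ∩ T`. -/
def RSDeltaIntegrable (T : Set ℝ) (a b : ℝ) (f g : ℝ → ℝ) : Prop :=
  lowerIntD T a b f g = upperIntD T a b f g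

/-- The Riemann–Stieltjes delta integral `∫ₐᵇ f Δg`. -/
def RSDeltaIntegral (T : Set ℝ) (a b : ℝ) (f g : ℝ → ℝ) : ℝ := upperIntD T a b f g

/-- `f` is Riemann–Stieltjes nabla integrable with respect to `g` on `[a,b] ∩ T`. -/
def RSNablaIntegrable (T : Set ℝ) (a b : ℝ) (f g : ℝ → ℝ) : Prop :=
  lowerIntN T a b f g = upperIntN T a b f g

/-- The Riemann–Stieltjes nabla integral `∫ₐᵇ f ∇g`. -/
def RSNablaIntegral (T : Set ℝ) (a b : ℝ) (f g : ℝ → ℝ) : ℝ := upperIntN T a b f g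

/-!
Starting from a point `t`, let `u` be the last point of `[a,b] ∩ T` beyond `t` with
`g u ≤ g t + δ`. If `u` is right-dense, continuity forces `g u = g t + δ`; otherwise the step
from `u` to `σ u` is admissible because `ρ (σ u) = u`, and `g (σ u) > g t + δ`. Either way one
or two admissible steps raise `g` by at least `δ`, and as `g` is bounded on the compact set
`[a,b] ∩ T`, finitely many such moves reach `b`.
-/

def IsFineStep (T : Set ℝ) (g : ℝ → ℝ) (δ x y : ℝ) : Prop :=
  g y - g x ≤ δ ∨ (g y - g x > δ ∧ tsRho T y = x)

lemma isFineStep_of_tsRho_eq {T : Set ℝ} {g : ℝ → ℝ} {δ x y : ℝ} (h : tsRho T y = x) :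
    IsFineStep T g δ x y :=
  (le_or_gt _ _).imp_right (⟨·, h⟩)

namespace TSPartition

variable {T : Set ℝ} {a b c : ℝ}

def IsFine (P : TSPartition T a b) (g : ℝ → ℝ) (δ : ℝ) : Prop :=
  ∀ j < P.n, IsFineStep T g δ (P.t j) (P.t (j + 1))

def single (ha : a ∈ T) (hb : b ∈ T) (hab : a < b) : TSPartition T a b where
  n := 1
  t j := if j = 0 then a else b
  npos := one_pos
  mem j _ := by split <;> assumption
  first := by simp
  last := by simp
  mono j hj := by
    obtain rfl : j = 0 := by omega
    simpa using hab

lemma isFine_single {g : ℝ → ℝ} {δ : ℝ} (ha : a ∈ T) (hb : b ∈ T) (hab : a < b)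
    (h : IsFineStep T g δ a b) : (single ha hb hab).IsFine g δ := by
  intro j hj
  obtain rfl : j = 0 := by simpa [single] using hj
  simpa [single] using h

def appendT (P : TSPartition T a b) (Q : TSPartition T b c) (j : ℕ) : ℝ :=
  if j ≤ P.n then P.t j else Q.t (j - P.n)

lemma appendT_of_le (P : TSPartition T a b) (Q : TSPartition T b c) {j : ℕ} (hj : j ≤ P.n) :
    appendT P Q j = P.t j :=
  if_pos hj

lemma appendT_of_ge (P : TSPartition T a b) (Q : TSPartition T b c) {j : ℕ} (hj : P.n ≤ j) :
    appendT P Q j = Q.t (j - P.n) := by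
  unfold appendT
  split_ifs with h
  · obtain rfl : j = P.n := le_antisymm h hj
    simp [P.last, Q.first]
  · rfl

def append (P : TSPartition T a b) (Q : TSPartition T b c) : TSPartition T a c where
  n := P.n + Q.n
  t := appendT P Q
  npos := Nat.add_pos_left P.npos _
  mem j hj := by
    rcases le_total j P.n with h | h
    · rw [appendT_of_le P Q h]; exact P.mem j h
    · rw [appendT_of_ge P Q h]; exact Q.mem _ (by omega)
  first := by rw [appendT_of_le P Q (Nat.zero_le _), P.first]
  last := by rw [appendT_of_ge P Q (by omega), Nat.add_sub_cancel_left, Q.last]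
  mono j hj := by
    rcases lt_or_ge j P.n with h | h
    · rw [appendT_of_le P Q h.le, appendT_of_le P Q h]; exact P.mono j h
    · rw [appendT_of_ge P Q h, appendT_of_ge P Q (by omega), Nat.sub_add_comm h]
      exact Q.mono _ (by omega)

lemma IsFine.append {g : ℝ → ℝ} {δ : ℝ} {P : TSPartition T a b} {Q : TSPartition T b c}
    (hP : P.IsFine g δ) (hQ : Q.IsFine g δ) : (P.append Q).IsFine g δ := by
  intro j hj
  change IsFineStep T g δ (appendT P Q j) (appendT P Q (j + 1))
  rcases lt_or_ge j P.n with h | h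
  · rw [appendT_of_le P Q h.le, appendT_of_le P Q h]; exact hP j h
  · rw [appendT_of_ge P Q h, appendT_of_ge P Q (by omega), Nat.sub_add_comm h]
    exact hQ _ (by change j < P.n + Q.n at hj; omega)

end TSPartition

section TimeScale

variable {T : Set ℝ} {u b : ℝ}

lemma bddBelow_tsSigma_set : BddBelow {s ∈ T | u < s} :=
  ⟨u, fun _ hs => hs.2.le⟩

lemma tsSigma_mem (hT : IsClosed T) (hb : b ∈ T) (hub : u < b) : tsSigma T u ∈ T :=
  closure_minimal (fun _ hs => hs.1) hT
    (csInf_mem_closure (s := {s ∈ T | u < s}) ⟨b, hb, hub⟩ bddBelow_tsSigma_set)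

lemma le_tsSigma (hb : b ∈ T) (hub : u < b) : u ≤ tsSigma T u :=
  le_csInf ⟨b, hb, hub⟩ fun _ hs => hs.2.le

lemma tsSigma_le (hb : b ∈ T) (hub : u < b) : tsSigma T u ≤ b :=
  csInf_le bddBelow_tsSigma_set ⟨hb, hub⟩

lemma tsRho_tsSigma (hu : u ∈ T) (h : u < tsSigma T u) : tsRho T (tsSigma T u) = u := by
  refine le_antisymm (csSup_le ⟨u, hu, h⟩ ?_) (le_csSup ⟨_, fun _ hs => hs.2.le⟩ ⟨hu, h⟩)
  rintro s ⟨hsT, hsσ⟩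
  by_contra! hus
  exact (csInf_le bddBelow_tsSigma_set ⟨hsT, hus⟩).not_gt hsσ

lemma mem_closure_of_tsSigma_eq (hb : b ∈ T) (hub : u < b) (hσ : tsSigma T u = u) :
    u ∈ closure {s ∈ T | u < s} := by
  have h := csInf_mem_closure (s := {s ∈ T | u < s}) ⟨b, hb, hub⟩ bddBelow_tsSigma_set
  rwa [← tsSigma, hσ] at h

lemma le_of_tsSigma_eq {a c : ℝ} {g : ℝ → ℝ} (hb : b ∈ T) (hau : a ≤ u) (hub : u < b)
    (hσ : tsSigma T u = u) (hg : ContinuousWithinAt g (Icc a b ∩ T) u)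
    (hc : ∀ s ∈ Icc a b ∩ T, u < s → c < g s) : c ≤ g u := by
  have hsub : Iio b ∩ {s ∈ T | u < s} ⊆ {s ∈ Icc a b ∩ T | u < s} :=
    fun s ⟨hsb, hsT, hus⟩ => ⟨⟨⟨hau.trans hus.le, hsb.le⟩, hsT⟩, hus⟩
  have hcl : u ∈ closure {s ∈ Icc a b ∩ T | u < s} :=
    closure_mono hsub (isOpen_Iio.inter_closure ⟨hub, mem_closure_of_tsSigma_eq hb hub hσ⟩)
  exact ContinuousWithinAt.closure_le hcl continuousWithinAt_const (hg.mono fun _ hs => hs.1)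
    fun s hs => (hc s hs.1 hs.2).le

end TimeScale

lemma IsCompact.exists_isGreatest_sublevel {I : Set ℝ} {g : ℝ → ℝ} {t c : ℝ} (hI : IsCompact I)
    (hg : ContinuousOn g I) (ht : t ∈ I) (htc : g t ≤ c) :
    ∃ u, IsGreatest {s ∈ I | t ≤ s ∧ g s ≤ c} u := by
  have hclosed : IsClosed (I ∩ g ⁻¹' Iic c ∩ Ici t) :=
    (hg.preimage_isClosed_of_isClosed hI.isClosed isClosed_Iic).inter isClosed_Ici
  obtain ⟨u, ⟨⟨huI, hgu⟩, htu⟩, hmax⟩ :=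
    (hI.of_isClosed_subset hclosed fun _ hs => hs.1.1).exists_isGreatest ⟨t, ⟨ht, htc⟩, le_refl t⟩
  exact ⟨u, ⟨huI, htu, hgu⟩, fun s ⟨hsI, hts, hgs⟩ => hmax ⟨⟨hsI, hgs⟩, hts⟩⟩

section FinePartition

variable {T : Set ℝ} {a b δ : ℝ} {g : ℝ → ℝ}

lemma exists_isFine_step (hT : IsClosed T) (hb : b ∈ T) (hδ : 0 < δ)
    (hgc : ContinuousOn g (Icc a b ∩ T)) {t : ℝ} (ht : t ∈ Icc a b ∩ T) (htb : t < b) :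
    ∃ t' ∈ Icc a b ∩ T, (t' = b ∨ g t + δ ≤ g t') ∧
      ∃ P : TSPartition T t t', P.IsFine g δ := by
  obtain ⟨u, ⟨huI, htu, hgu⟩, hmax⟩ :=
    (isCompact_Icc.inter_right hT).exists_isGreatest_sublevel hgc ht
      (le_add_of_nonneg_right hδ.le)
  have hbeyond : ∀ s ∈ Icc a b ∩ T, u < s → g t + δ < g s := fun s hs hus =>
    not_le.1 fun h => (hmax ⟨hs, htu.trans hus.le, h⟩).not_gt hus
  rcases huI.1.2.eq_or_lt with rfl | hub
  · exact ⟨u, huI, Or.inl rfl, _, TSPartition.isFine_single ht.2 hb htb (Or.inl (by linarith))⟩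
  rcases (le_tsSigma hb hub).eq_or_lt with hσ | hum
  · -- `u` is right-dense
    have hgain : g t + δ ≤ g u := le_of_tsSigma_eq hb huI.1.1 hub hσ.symm (hgc u huI) hbeyond
    have htu' : t < u := htu.lt_of_ne (by rintro rfl; linarith)
    exact ⟨u, huI, Or.inr hgain, _,
      TSPartition.isFine_single ht.2 huI.2 htu' (Or.inl (by linarith))⟩
  · -- `u` is right-scattered
    have hσI : tsSigma T u ∈ Icc a b ∩ T :=
      ⟨⟨huI.1.1.trans hum.le, tsSigma_le hb hub⟩, tsSigma_mem hT hb hub⟩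
    have hjump := TSPartition.isFine_single (g := g) (δ := δ) huI.2 hσI.2 hum
      (isFineStep_of_tsRho_eq (tsRho_tsSigma huI.2 hum))
    refine ⟨_, hσI, Or.inr (hbeyond _ hσI hum).le, ?_⟩
    rcases htu.eq_or_lt with rfl | htu'
    · exact ⟨_, hjump⟩
    · exact ⟨_, (TSPartition.isFine_single ht.2 huI.2 htu' (Or.inl (by linarith))).append hjump⟩

lemma exists_isFine_of_lt_mul (hT : IsClosed T) (hb : b ∈ T) (hδ : 0 < δ)
    (hgc : ContinuousOn g (Icc a b ∩ T)) {M : ℝ} (hM : ∀ s ∈ Icc a b ∩ T, g s ≤ M) (n : ℕ) :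
    ∀ t ∈ Icc a b ∩ T, t < b → M - g t < n * δ → ∃ P : TSPartition T t b, P.IsFine g δ := by
  induction n with
  | zero =>
    intro t ht _ hn
    linarith [hM t ht, show M - g t < 0 by simpa using hn]
  | succ n ih =>
    intro t ht htb hn
    obtain ⟨t', ht', hstop, P, hP⟩ := exists_isFine_step hT hb hδ hgc ht htb
    rcases ht'.1.2.eq_or_lt with rfl | ht'b
    · exact ⟨P, hP⟩
    have hgain : g t + δ ≤ g t' := hstop.resolve_left ht'b.ne
    obtain ⟨Q, hQ⟩ := ih t' ht' ht'b (by push_cast at hn; linarith)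
    exact ⟨_, hP.append hQ⟩

end FinePartition

theorem statement0_general (T : Set ℝ) (hT : IsClosed T) (a b : ℝ) (ha : a ∈ T) (hb : b ∈ T)
    (hab : a < b) (g : ℝ → ℝ)
    (hgc : ContinuousOn g (Set.Icc a b ∩ T)) :
    ∀ δ > (0 : ℝ), ∃ P : TSPartition T a b, ∀ j < P.n,
      g (P.t (j + 1)) - g (P.t j) ≤ δ ∨
        (g (P.t (j + 1)) - g (P.t j) > δ ∧ tsRho T (P.t (j + 1)) = P.t j) := by
  intro δ hδ
  obtain ⟨M, hM⟩ := (isCompact_Icc.inter_right hT).bddAbove_image hgc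
  obtain ⟨n, hn⟩ := exists_nat_gt ((M - g a) / δ)
  exact exists_isFine_of_lt_mul hT hb hδ hgc (fun s hs => hM (mem_image_of_mem g hs)) n
    a ⟨⟨le_rfl, hab.le⟩, ha⟩ hab ((div_lt_iff₀ hδ).1 hn)

/-- Lemma 2: refinement partition for continuous strictly increasing `g`. -/
theorem statement0 (T : Set ℝ) (hT : IsClosed T) (a b : ℝ) (ha : a ∈ T) (hb : b ∈ T)
    (hab : a < b) (g : ℝ → ℝ)
    (hgc : ContinuousOn g (Set.Icc a b ∩ T))
    (hgm : StrictMonoOn g (Set.Icc a b ∩ T)) :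
    ∀ δ > (0 : ℝ), ∃ P : TSPartition T a b, ∀ j < P.n,
      g (P.t (j + 1)) - g (P.t j) ≤ δ ∨
        (g (P.t (j + 1)) - g (P.t j) > δ ∧ tsRho T (P.t (j + 1)) = P.t j) :=
  statement0_general T hT a b ha hb hab g hgc
end
end

section
/- Let 𝕋 be a time scale, a,b ∈ 𝕋, a < b, g : [a,b]∩𝕋 → ℝ strictly increasing, and f : [a,b]∩𝕋 → ℝ strictly increasing. Then ∫ₐᵇ f Δg ≤ ∫ₐᵇ f ∇g (the delta Riemann–Stieltjes integral is at most the nabla one), whenever both exist. -/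
open Set Filter

noncomputable section

/-!
On the `j`-th cell, the delta cell `[tⱼ, ρ(tⱼ₊₁)] ∩ 𝕋` contains its left endpoint `tⱼ`, so the
infimum of the increasing `f` there is `f tⱼ`; every point of the nabla cell
`[σ(tⱼ), tⱼ₊₁] ∩ 𝕋` lies to the right of `tⱼ`, so the infimum there is at least `f tⱼ`. Hence
every lower delta sum is at most the lower nabla sum of the same partition, and integrability
identifies both integrals with the corresponding lower integrals.
-/

section JumpOperators

variable {T : Set ℝ} {u v : ℝ}

lemma le_tsRho (hu : u ∈ T) (huv : u < v) : u ≤ tsRho T v :=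
  le_csSup ⟨v, fun _ hx => hx.2.le⟩ ⟨hu, huv⟩

lemma tsRho_le (hu : u ∈ T) (huv : u < v) : tsRho T v ≤ v :=
  csSup_le ⟨u, hu, huv⟩ fun _ hx => hx.2.le

lemma le_tsSigma_s9 (hv : v ∈ T) (huv : u < v) : u ≤ tsSigma T u :=
  le_csInf ⟨v, hv, huv⟩ fun _ hx => hx.2.le

lemma tsSigma_le_s9 (hv : v ∈ T) (huv : u < v) : tsSigma T u ≤ v :=
  csInf_le ⟨u, fun _ hx => hx.2.le⟩ ⟨hv, huv⟩

end JumpOperators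

namespace TSPartition

variable {T : Set ℝ} {a b : ℝ} (P : TSPartition T a b) {f g : ℝ → ℝ}

lemma t_le_t {i j : ℕ} (hij : i ≤ j) (hj : j ≤ P.n) : P.t i ≤ P.t j := by
  induction j, hij using Nat.le_induction with
  | base => rfl
  | succ k _ ih => exact (ih (by omega)).trans (P.mono k (by omega)).le

lemma t_mem {j : ℕ} (hj : j ≤ P.n) : P.t j ∈ Icc a b ∩ T :=
  ⟨⟨P.first.ge.trans (P.t_le_t (Nat.zero_le j) hj), (P.t_le_t hj le_rfl).trans P.last.le⟩,
    P.mem j hj⟩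

lemma sInf_image_deltaCell (hf : MonotoneOn f (Icc a b ∩ T)) {j : ℕ} (hj : j < P.n) :
    sInf (f '' (Icc (P.t j) (tsRho T (P.t (j + 1))) ∩ T)) = f (P.t j) := by
  have hρ := tsRho_le (P.mem j hj.le) (P.mono j hj)
  have hcell : Icc (P.t j) (tsRho T (P.t (j + 1))) ∩ T ⊆ Icc a b ∩ T := fun x hx =>
    ⟨⟨(P.t_mem hj.le).1.1.trans hx.1.1, hx.1.2.trans (hρ.trans (P.t_mem hj).1.2)⟩, hx.2⟩
  have hleast : IsLeast (Icc (P.t j) (tsRho T (P.t (j + 1))) ∩ T) (P.t j) :=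
    ⟨⟨⟨le_rfl, le_tsRho (P.mem j hj.le) (P.mono j hj)⟩, P.mem j hj.le⟩, fun _ hx => hx.1.1⟩
  exact ((hf.mono hcell).map_isLeast hleast).csInf_eq

lemma sInf_image_nablaCell_mem_Icc (hf : MonotoneOn f (Icc a b ∩ T)) {j : ℕ} (hj : j < P.n) :
    sInf (f '' (Icc (tsSigma T (P.t j)) (P.t (j + 1)) ∩ T)) ∈
      Icc (f (P.t j)) (f (P.t (j + 1))) := by
  have hσ := le_tsSigma_s9 (P.mem (j + 1) hj) (P.mono j hj)
  have hcell : Icc (tsSigma T (P.t j)) (P.t (j + 1)) ∩ T ⊆ Icc a b ∩ T := fun x hx =>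
    ⟨⟨(P.t_mem hj.le).1.1.trans (hσ.trans hx.1.1), hx.1.2.trans (P.t_mem hj).1.2⟩, hx.2⟩
  have hright : P.t (j + 1) ∈ Icc (tsSigma T (P.t j)) (P.t (j + 1)) ∩ T :=
    ⟨⟨tsSigma_le_s9 (P.mem (j + 1) hj) (P.mono j hj), le_rfl⟩, P.mem (j + 1) hj⟩
  have hlower : f (P.t j) ∈ lowerBounds (f '' (Icc (tsSigma T (P.t j)) (P.t (j + 1)) ∩ T)) :=
    hf.mem_lowerBounds_image hcell (fun _ hx => hσ.trans hx.1.1) (P.t_mem hj.le)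
  exact ⟨le_csInf ⟨_, mem_image_of_mem f hright⟩ hlower,
    csInf_le ⟨_, hlower⟩ (mem_image_of_mem f hright)⟩

lemma g_sub_nonneg (hg : MonotoneOn g (Icc a b ∩ T)) {j : ℕ} (hj : j < P.n) :
    0 ≤ g (P.t (j + 1)) - g (P.t j) :=
  sub_nonneg.2 (hg (P.t_mem hj.le) (P.t_mem hj) (P.mono j hj).le)

lemma lowerSumD_le_lowerSumN (hf : MonotoneOn f (Icc a b ∩ T))
    (hg : MonotoneOn g (Icc a b ∩ T)) : lowerSumD T f g P ≤ lowerSumN T f g P := by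
  refine Finset.sum_le_sum fun j hj => ?_
  have hj : j < P.n := Finset.mem_range.1 hj
  rw [P.sInf_image_deltaCell hf hj]
  exact mul_le_mul_of_nonneg_right (P.sInf_image_nablaCell_mem_Icc hf hj).1 (P.g_sub_nonneg hg hj)

lemma lowerSumN_le (hf : MonotoneOn f (Icc a b ∩ T)) (hg : MonotoneOn g (Icc a b ∩ T)) :
    lowerSumN T f g P ≤ f b * (g b - g a) := by
  have hb : b ∈ Icc a b ∩ T := by simpa only [P.last] using P.t_mem le_rfl
  have hfb : ∀ j ≤ P.n, f (P.t j) ≤ f b := fun j hj => hf (P.t_mem hj) hb (P.t_mem hj).1.2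
  calc lowerSumN T f g P
      ≤ ∑ j ∈ Finset.range P.n, f b * (g (P.t (j + 1)) - g (P.t j)) := by
        refine Finset.sum_le_sum fun j hj => ?_
        have hj : j < P.n := Finset.mem_range.1 hj
        exact mul_le_mul_of_nonneg_right
          ((P.sInf_image_nablaCell_mem_Icc hf hj).2.trans (hfb (j + 1) hj)) (P.g_sub_nonneg hg hj)
    _ = f b * (g b - g a) := by
        rw [← Finset.mul_sum, Finset.sum_range_sub (fun j => g (P.t j)), P.first, P.last]

end TSPartition

theorem statement9_general (T : Set ℝ) (a b : ℝ) (f g : ℝ → ℝ)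
    (hg : StrictMonoOn g (Set.Icc a b ∩ T))
    (hf : StrictMonoOn f (Set.Icc a b ∩ T))
    (hD : RSDeltaIntegrable T a b f g) (hN : RSNablaIntegrable T a b f g) :
    RSDeltaIntegral T a b f g ≤ RSNablaIntegral T a b f g := by
  have hbdd : BddAbove (range fun P : TSPartition T a b => lowerSumN T f g P) :=
    ⟨f b * (g b - g a), by
      rintro _ ⟨P, rfl⟩
      exact P.lowerSumN_le hf.monotoneOn hg.monotoneOn⟩
  calc RSDeltaIntegral T a b f g = lowerIntD T a b f g := hD.symm
    _ ≤ lowerIntN T a b f g :=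
      ciSup_mono hbdd fun P => P.lowerSumD_le_lowerSumN hf.monotoneOn hg.monotoneOn
    _ = RSNablaIntegral T a b f g := hN

/-- For strictly increasing `f`, the delta integral is at most the nabla integral. -/
theorem statement9 (T : Set ℝ) (hT : IsClosed T) (a b : ℝ) (ha : a ∈ T) (hb : b ∈ T)
    (hab : a < b) (f g : ℝ → ℝ)
    (hg : StrictMonoOn g (Set.Icc a b ∩ T))
    (hf : StrictMonoOn f (Set.Icc a b ∩ T))
    (hD : RSDeltaIntegrable T a b f g) (hN : RSNablaIntegrable T a b f g) :
    RSDeltaIntegral T a b f g ≤ RSNablaIntegral T a b f g :=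
  statement9_general T a b f g hg hf hD hN
end
end

section
/- (Substitution) Let 𝕋̃ be a time scale and φ : 𝕋̃ → ℝ strictly increasing and continuous with 𝕋 = φ(𝕋̃) a time scale, mapping [A,B]∩𝕋̃ onto [a,b]∩𝕋. If g is increasing on [a,b]∩𝕋 and f is Riemann–Stieltjes delta integrable with respect to g on [a,b]∩𝕋, then f∘φ is Riemann–Stieltjes delta integrable with respect to g∘φ on [A,B]∩𝕋̃ and ∫ₐᵇ f(t) Δg(t) = ∫_A^B f(φ(s)) Δ g(φ(s)). -/
open Set Filter

noncomputable section

/-!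
The map `φ` carries partitions of `[A,B] ∩ T'` to partitions of `[φ A, φ B] ∩ φ(T')` and back.
Being continuous and strictly increasing, `φ` commutes with the backward jump operators, so it maps
each cell `[tⱼ, ρ(tⱼ₊₁)] ∩ T'` onto the corresponding cell of the image partition. Hence
corresponding Darboux sums of `f` against `g` and of `f ∘ φ` against `g ∘ φ` agree, and so do the
upper and lower integrals.
-/

section Substitution

variable {T : Set ℝ} {φ : ℝ → ℝ}

theorem tsRho_mem_of_isClosed (hT : IsClosed T) {s t : ℝ} (hs : s ∈ T) (hst : s < t) :
    tsRho T t ∈ T :=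
  closure_minimal (sep_subset _ _) hT (csSup_mem_closure ⟨s, hs, hst⟩ ⟨t, fun _ hx => hx.2.le⟩)

theorem StrictMonoOn.sep_image_lt (hφ : StrictMonoOn φ T) {t : ℝ} (ht : t ∈ T) :
    {u ∈ φ '' T | u < φ t} = φ '' {s ∈ T | s < t} := by
  ext u
  constructor
  · rintro ⟨⟨x, hx, rfl⟩, hxt⟩
    exact ⟨x, ⟨hx, (hφ.lt_iff_lt hx ht).mp hxt⟩, rfl⟩
  · rintro ⟨x, ⟨hx, hxt⟩, rfl⟩
    exact ⟨⟨x, hx, rfl⟩, hφ hx ht hxt⟩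

theorem StrictMonoOn.image_Icc_inter (hφ : StrictMonoOn φ T) {c d : ℝ} (hc : c ∈ T)
    (hd : d ∈ T) : φ '' (Icc c d ∩ T) = Icc (φ c) (φ d) ∩ φ '' T := by
  ext u
  constructor
  · rintro ⟨x, ⟨⟨hcx, hxd⟩, hx⟩, rfl⟩
    exact ⟨⟨hφ.monotoneOn hc hx hcx, hφ.monotoneOn hx hd hxd⟩, x, hx, rfl⟩
  · rintro ⟨⟨hcu, hud⟩, x, hx, rfl⟩
    exact ⟨x, ⟨⟨(hφ.le_iff_le hc hx).mp hcu, (hφ.le_iff_le hx hd).mp hud⟩, hx⟩, rfl⟩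

theorem tsRho_image (hT : IsClosed T) (hφ : StrictMonoOn φ T) (hφc : ContinuousOn φ T)
    {s t : ℝ} (hs : s ∈ T) (ht : t ∈ T) (hst : s < t) :
    tsRho (φ '' T) (φ t) = φ (tsRho T t) := by
  rw [tsRho, tsRho, hφ.sep_image_lt ht]
  exact (MonotoneOn.map_csSup_of_continuousWithinAt
    ((hφc _ (tsRho_mem_of_isClosed hT hs hst)).mono (sep_subset _ _))
    (hφ.monotoneOn.mono (sep_subset _ _)) ⟨s, hs, hst⟩ ⟨t, fun _ hx => hx.2.le⟩).symm

namespace TSPartition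

variable {A B : ℝ}

def map (P : TSPartition T A B) (hφ : StrictMonoOn φ T) : TSPartition (φ '' T) (φ A) (φ B) where
  n := P.n
  t := φ ∘ P.t
  npos := P.npos
  mem j hj := ⟨P.t j, P.mem j hj, rfl⟩
  first := congrArg φ P.first
  last := congrArg φ P.last
  mono j hj := hφ (P.mem j hj.le) (P.mem (j + 1) hj) (P.mono j hj)

theorem exists_map_eq (Q : TSPartition (φ '' T) (φ A) (φ B)) (hφ : StrictMonoOn φ T)
    (hA : A ∈ T) (hB : B ∈ T) :
    ∃ P : TSPartition T A B, Q.n = P.n ∧ ∀ j ≤ P.n, Q.t j = φ (P.t j) := by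
  choose! s hsT hφs using fun j (hj : j ≤ Q.n) => Q.mem j hj
  refine ⟨⟨Q.n, s, Q.npos, hsT, ?_, ?_, fun j hj => ?_⟩, rfl, fun j hj => (hφs j hj).symm⟩
  · exact hφ.injOn (hsT 0 (Nat.zero_le _)) hA (by rw [hφs 0 (Nat.zero_le _), Q.first])
  · exact hφ.injOn (hsT Q.n le_rfl) hB (by rw [hφs Q.n le_rfl, Q.last])
  · rw [← hφ.lt_iff_lt (hsT j hj.le) (hsT (j + 1) hj), hφs j hj.le, hφs (j + 1) hj]
    exact Q.mono j hj

theorem image_cell (P : TSPartition T A B) (hT : IsClosed T) (hφ : StrictMonoOn φ T)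
    (hφc : ContinuousOn φ T) (f : ℝ → ℝ) {j : ℕ} (hj : j < P.n) :
    f '' (Icc (φ (P.t j)) (tsRho (φ '' T) (φ (P.t (j + 1)))) ∩ φ '' T) =
      (f ∘ φ) '' (Icc (P.t j) (tsRho T (P.t (j + 1))) ∩ T) := by
  have hmem := P.mem j hj.le
  rw [tsRho_image hT hφ hφc hmem (P.mem (j + 1) hj) (P.mono j hj),
    ← hφ.image_Icc_inter hmem (tsRho_mem_of_isClosed hT hmem (P.mono j hj)), image_image]
  rfl

variable {a b : ℝ} (f g : ℝ → ℝ)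

theorem upperSumD_eq_of_comp (P : TSPartition T A B) (Q : TSPartition (φ '' T) a b)
    (hT : IsClosed T) (hφ : StrictMonoOn φ T) (hφc : ContinuousOn φ T) (hn : Q.n = P.n)
    (ht : ∀ j ≤ P.n, Q.t j = φ (P.t j)) :
    upperSumD (φ '' T) f g Q = upperSumD T (f ∘ φ) (g ∘ φ) P := by
  rw [upperSumD, upperSumD, hn]
  refine Finset.sum_congr rfl fun j hj => ?_
  have hj : j < P.n := Finset.mem_range.mp hj
  rw [ht j hj.le, ht (j + 1) hj, P.image_cell hT hφ hφc f hj]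
  rfl

theorem lowerSumD_eq_of_comp (P : TSPartition T A B) (Q : TSPartition (φ '' T) a b)
    (hT : IsClosed T) (hφ : StrictMonoOn φ T) (hφc : ContinuousOn φ T) (hn : Q.n = P.n)
    (ht : ∀ j ≤ P.n, Q.t j = φ (P.t j)) :
    lowerSumD (φ '' T) f g Q = lowerSumD T (f ∘ φ) (g ∘ φ) P := by
  rw [lowerSumD, lowerSumD, hn]
  refine Finset.sum_congr rfl fun j hj => ?_
  have hj : j < P.n := Finset.mem_range.mp hj
  rw [ht j hj.le, ht (j + 1) hj, P.image_cell hT hφ hφc f hj]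
  rfl

end TSPartition

variable {A B : ℝ} (f g : ℝ → ℝ)

theorem upperIntD_image (hT : IsClosed T) (hφ : StrictMonoOn φ T) (hφc : ContinuousOn φ T)
    (hA : A ∈ T) (hB : B ∈ T) :
    upperIntD (φ '' T) (φ A) (φ B) f g = upperIntD T A B (f ∘ φ) (g ∘ φ) := by
  refine congrArg sInf (subset_antisymm (range_subset_iff.2 fun Q => ?_)
    (range_subset_iff.2 fun P => ⟨P.map hφ, P.upperSumD_eq_of_comp f g _ hT hφ hφc rfl
      fun _ _ => rfl⟩))
  obtain ⟨P, hn, ht⟩ := Q.exists_map_eq hφ hA hB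
  exact ⟨P, (P.upperSumD_eq_of_comp f g Q hT hφ hφc hn ht).symm⟩

theorem lowerIntD_image (hT : IsClosed T) (hφ : StrictMonoOn φ T) (hφc : ContinuousOn φ T)
    (hA : A ∈ T) (hB : B ∈ T) :
    lowerIntD (φ '' T) (φ A) (φ B) f g = lowerIntD T A B (f ∘ φ) (g ∘ φ) := by
  refine congrArg sSup (subset_antisymm (range_subset_iff.2 fun Q => ?_)
    (range_subset_iff.2 fun P => ⟨P.map hφ, P.lowerSumD_eq_of_comp f g _ hT hφ hφc rfl
      fun _ _ => rfl⟩))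
  obtain ⟨P, hn, ht⟩ := Q.exists_map_eq hφ hA hB
  exact ⟨P, (P.lowerSumD_eq_of_comp f g Q hT hφ hφc hn ht).symm⟩

end Substitution

theorem statement18_general (T T' : Set ℝ) (hT' : IsClosed T') (φ : ℝ → ℝ)
    (hφmono : StrictMonoOn φ T') (hφcont : ContinuousOn φ T')
    (hφim : T = φ '' T')
    (A B a b : ℝ) (hA : A ∈ T') (hB : B ∈ T')
    (hφA : φ A = a) (hφB : φ B = b)
    (f g : ℝ → ℝ)
    (hint : RSDeltaIntegrable T a b f g) :
    RSDeltaIntegrable T' A B (f ∘ φ) (g ∘ φ) ∧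
    RSDeltaIntegral T a b f g = RSDeltaIntegral T' A B (f ∘ φ) (g ∘ φ) := by
  subst hφim hφA hφB
  have hU := upperIntD_image f g hT' hφmono hφcont hA hB
  have hL := lowerIntD_image f g hT' hφmono hφcont hA hB
  exact ⟨by rw [RSDeltaIntegrable, ← hU, ← hL]; exact hint, hU⟩

/-- Integration by substitution. -/
theorem statement18 (T T' : Set ℝ) (hT : IsClosed T) (hT' : IsClosed T')
    (hT'ne : T'.Nonempty) (φ : ℝ → ℝ)
    (hφmono : StrictMonoOn φ T') (hφcont : ContinuousOn φ T')
    (hφim : T = φ '' T')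
    (A B a b : ℝ) (hA : A ∈ T') (hB : B ∈ T') (hAB : A < B)
    (hφA : φ A = a) (hφB : φ B = b)
    (honto : φ '' (Set.Icc A B ∩ T') = Set.Icc a b ∩ T)
    (f g : ℝ → ℝ) (hg : MonotoneOn g (Set.Icc a b ∩ T))
    (hint : RSDeltaIntegrable T a b f g) :
    RSDeltaIntegrable T' A B (f ∘ φ) (g ∘ φ) ∧
    RSDeltaIntegral T a b f g = RSDeltaIntegral T' A B (f ∘ φ) (g ∘ φ) :=
  statement18_general T T' hT' φ hφmono hφcont hφim A B a b hA hB hφA hφB f g hint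
end
end

section
/- (Nabla mean value theorem) Let f be continuous on [a,b] ∩ 𝕋 and nabla differentiable at every point of (a,b] ∩ 𝕋. Then there exist ξ, τ ∈ (a,b] ∩ 𝕋 such that f^∇(ξ) ≤ (f(b) − f(a))/(b − a) ≤ f^∇(τ). -/
open Set Filter

noncomputable section

/-- `f` has nabla derivative `d` at `t` relative to the time scale `T`. -/
def HasNablaDerivAt (T : Set ℝ) (f : ℝ → ℝ) (d t : ℝ) : Prop :=
  ∀ ε > (0 : ℝ), ∃ U ∈ nhds t, ∀ s ∈ U ∩ T,
    |f (tsRho T t) - f s - d * (tsRho T t - s)| ≤ ε * |tsRho T t - s|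

/-! If `f` restricted to `[a,t] ∩ T` is maximal at `t`, its nabla derivative at `t` is
nonnegative: at a left-scattered `t` it is the slope `(f t - f (ρ t)) / (t - ρ t)`, and at a
left-dense `t` it is approximated by slopes `(f t - f s) / (t - s)` with `s ∈ T`, `s ↑ t`.
Apply this to `f x - r x` and its negative, `r` the secant slope: their values at `a` and `b`
agree, so their extrema on the compact set `[a,b] ∩ T` may be taken in `(a,b]`. -/

section JumpOperator

variable {T : Set ℝ} {a t : ℝ}

lemma tsRho_le_s19 (ha : a ∈ T) (hat : a < t) : tsRho T t ≤ t :=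
  csSup_le ⟨a, ha, hat⟩ fun _ hs => hs.2.le

lemma le_tsRho_s19 (ha : a ∈ T) (hat : a < t) : a ≤ tsRho T t :=
  le_csSup ⟨t, fun _ hs => hs.2.le⟩ ⟨ha, hat⟩

lemma tsRho_mem (hT : IsClosed T) (ha : a ∈ T) (hat : a < t) : tsRho T t ∈ T :=
  closure_minimal (fun _ hs => hs.1) hT (csSup_mem_closure ⟨a, ha, hat⟩ ⟨t, fun _ hs => hs.2.le⟩)

lemma exists_mem_Ioo_of_tsRho_eq (ha : a ∈ T) (hat : a < t) (hρ : tsRho T t = t) {u : ℝ}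
    (hu : u < t) : ∃ s ∈ T, u < s ∧ s < t := by
  have hne : {s ∈ T | s < t}.Nonempty := ⟨a, ha, hat⟩
  obtain ⟨s, ⟨hsT, hst⟩, hus⟩ := exists_lt_of_lt_csSup hne (hρ.symm ▸ hu : u < tsRho T t)
  exact ⟨s, hsT, hus, hst⟩

end JumpOperator

namespace HasNablaDerivAt

variable {T : Set ℝ} {f : ℝ → ℝ} {d t : ℝ}

lemma neg (h : HasNablaDerivAt T f d t) : HasNablaDerivAt T (fun x => -f x) (-d) t := by
  intro ε hε
  obtain ⟨U, hU, hUs⟩ := h ε hε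
  refine ⟨U, hU, fun s hs => ?_⟩
  rw [← abs_neg]
  convert hUs s hs using 2
  ring

lemma sub_mul_id (h : HasNablaDerivAt T f d t) (r : ℝ) :
    HasNablaDerivAt T (fun x => f x - r * x) (d - r) t := by
  intro ε hε
  obtain ⟨U, hU, hUs⟩ := h ε hε
  refine ⟨U, hU, fun s hs => ?_⟩
  convert hUs s hs using 2
  ring

lemma sub_eq_mul_of_tsRho_lt (h : HasNablaDerivAt T f d t) (ht : t ∈ T) (hρ : tsRho T t < t) :
    f t - f (tsRho T t) = d * (t - tsRho T t) := by
  set ρ := tsRho T t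
  have hsmall : ∀ ε > 0, |f ρ - f t - d * (ρ - t)| ≤ ε := fun ε hε => by
    obtain ⟨U, hU, hUs⟩ := h (ε / (t - ρ)) (div_pos hε (sub_pos.2 hρ))
    have := hUs t ⟨mem_of_mem_nhds hU, ht⟩
    rwa [abs_of_neg (sub_neg.2 hρ), neg_sub, div_mul_cancel₀ _ (sub_pos.2 hρ).ne'] at this
  have hzero : |f ρ - f t - d * (ρ - t)| ≤ 0 :=
    le_of_forall_pos_le_add fun ε hε => (zero_add ε).symm ▸ hsmall ε hε
  linarith [abs_nonpos_iff.1 hzero]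

lemma nonneg_of_isMaxOn (h : HasNablaDerivAt T f d t) (hT : IsClosed T) {a : ℝ} (ha : a ∈ T)
    (hat : a < t) (ht : t ∈ T) (hmax : IsMaxOn f (Icc a t ∩ T) t) : 0 ≤ d := by
  rcases (tsRho_le_s19 ha hat).eq_or_lt with hρ | hρ
  · refine le_of_forall_pos_le_add fun ε hε => ?_
    obtain ⟨U, hU, hUs⟩ := h ε hε
    obtain ⟨δ, hδ, hball⟩ := Metric.mem_nhds_iff.1 hU
    obtain ⟨s, hsT, hus, hst⟩ :=
      exists_mem_Ioo_of_tsRho_eq ha hat hρ (max_lt (sub_lt_self t hδ) hat)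
    have hsU : s ∈ U := hball <| by
      rw [Metric.mem_ball, Real.dist_eq, abs_sub_lt_iff]
      constructor <;> linarith [le_max_left (t - δ) a]
    have happrox := hUs s ⟨hsU, hsT⟩
    rw [hρ, abs_of_pos (sub_pos.2 hst)] at happrox
    have hfs : f s ≤ f t := hmax ⟨⟨(le_max_right _ _).trans hus.le, hst.le⟩, hsT⟩
    nlinarith [le_abs_self (f t - f s - d * (t - s))]
  · have hslope := h.sub_eq_mul_of_tsRho_lt ht hρ
    have hfρ : f (tsRho T t) ≤ f t :=
      hmax ⟨⟨le_tsRho_s19 ha hat, hρ.le⟩, tsRho_mem hT ha hat⟩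
    nlinarith

end HasNablaDerivAt

lemma exists_mem_Ioc_isMaxOn {T : Set ℝ} (hT : IsClosed T) {a b : ℝ} (ha : a ∈ T) (hb : b ∈ T)
    (hab : a < b) {g : ℝ → ℝ} (hgc : ContinuousOn g (Icc a b ∩ T)) (hg : g a = g b) :
    ∃ c ∈ Ioc a b ∩ T, IsMaxOn g (Icc a b ∩ T) c := by
  obtain ⟨c, hc, hmax⟩ :=
    (isCompact_Icc.inter_right hT).exists_isMaxOn ⟨a, ⟨le_rfl, hab.le⟩, ha⟩ hgc
  rcases hc.1.1.eq_or_lt with rfl | hac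
  · exact ⟨b, ⟨⟨hab, le_rfl⟩, hb⟩, fun x hx => hg ▸ hmax hx⟩
  · exact ⟨c, ⟨⟨hac, hc.1.2⟩, hc.2⟩, hmax⟩

/-- Nabla mean value theorem. -/
theorem statement19 (T : Set ℝ) (hT : IsClosed T) (a b : ℝ) (ha : a ∈ T) (hb : b ∈ T)
    (hab : a < b) (f : ℝ → ℝ) (fd : ℝ → ℝ)
    (hfc : ContinuousOn f (Set.Icc a b ∩ T))
    (hfd : ∀ t ∈ Set.Ioc a b ∩ T, HasNablaDerivAt T f (fd t) t) :
    ∃ ξ ∈ Set.Ioc a b ∩ T, ∃ τ ∈ Set.Ioc a b ∩ T,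
      fd ξ ≤ (f b - f a) / (b - a) ∧ (f b - f a) / (b - a) ≤ fd τ := by
  set r := (f b - f a) / (b - a)
  have hends : f a - r * a = f b - r * b := by
    simp only [r]
    field_simp [(sub_pos.2 hab).ne']
    ring
  have hgc : ContinuousOn (fun x => f x - r * x) (Icc a b ∩ T) :=
    hfc.sub (continuousOn_const.mul continuousOn_id)
  have hsub {c : ℝ} (hc : c ∈ Ioc a b ∩ T) : Icc a c ∩ T ⊆ Icc a b ∩ T :=
    inter_subset_inter_left T (Icc_subset_Icc_right hc.1.2)
  obtain ⟨τ, hτ, hτmax⟩ := exists_mem_Ioc_isMaxOn hT ha hb hab hgc hends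
  obtain ⟨ξ, hξ, hξmin⟩ := exists_mem_Ioc_isMaxOn hT ha hb hab hgc.neg (congrArg Neg.neg hends)
  have hτd := ((hfd τ hτ).sub_mul_id r).nonneg_of_isMaxOn hT ha hτ.1.1 hτ.2
    (hτmax.on_subset (hsub hτ))
  have hξd := ((hfd ξ hξ).sub_mul_id r).neg.nonneg_of_isMaxOn hT ha hξ.1.1 hξ.2
    (hξmin.on_subset (hsub hξ))
  exact ⟨ξ, hξ, τ, hτ, by linarith, by linarith⟩
end
end
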